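/- arXiv:2511.21628 — 4 statements merged into one kernel-verified Lean document; each statement's English description precedes it below -/
import Mathlib

section
/- Let n,s,ℓ,c be positive integers such that n=2s+c=3s-ℓ and c,ℓ∈[s-1]. Then none of the families P(s,ℓ), P'(s,ℓ), Q(s,ℓ), W(s,ℓ) contains an s-matching; that is, each of these families has matching number strictly less than s. -/
open Finset

/-- The ground set `[n] = {1, 2, …, n}`. -/
def ground (n : ℕ) : Finset ℕ := Finset.Icc 1 n

-- The matching number `ν(F)` of a family: the size of the largest pairwise
-- disjoint subfamily of `F`.
open Classical in
noncomputable def matchingNumber (F : Finset (Finset ℕ)) : ℕ :=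
  (F.powerset.filter fun M : Finset (Finset ℕ) =>
      (M : Set (Finset ℕ)).Pairwise fun A B => Disjoint A B).sup Finset.card

-- `e(n, s)`: the maximum size of a family `F ⊆ 2^[n]` with `ν(F) < s`.
open Classical in
noncomputable def extremalNumber (n s : ℕ) : ℕ :=
  (((ground n).powerset.powerset).filter fun F => matchingNumber F < s).sup Finset.card

/-- The family `P(s, ℓ) = {P ⊆ [n] : |P| + |P ∩ [ℓ-1]| ≥ 3}` (it depends only on `n, ℓ`). -/
def famP (n l : ℕ) : Finset (Finset ℕ) :=
  (ground n).powerset.filter fun A => 3 ≤ A.card + (A ∩ Finset.Icc 1 (l - 1)).card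

/-- The family `P'(s, ℓ)`: all subsets of `[n]` of size at least `3` together with
all `2`-element subsets of `[2ℓ-1]`. -/
def famP' (n l : ℕ) : Finset (Finset ℕ) :=
  ((ground n).powerset.filter fun A => 3 ≤ A.card) ∪
    (Finset.Icc 1 (2 * l - 1)).powersetCard 2

/-- The family `Q(s, ℓ)`: all subsets of `[n]` of size at least `3` together with all
`2`-element subsets of `[s+ℓ-1]`, with all `3`-element subsets of `[s+ℓ, n]` removed. -/
def famQ (n s l : ℕ) : Finset (Finset ℕ) :=
  (((ground n).powerset.filter fun A => 3 ≤ A.card) ∪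
      (Finset.Icc 1 (s + l - 1)).powersetCard 2) \
    (Finset.Icc (s + l) n).powersetCard 3

/-- The family `W(s, ℓ) = {P ⊆ [n] : |P ∩ [2s-1]| ≥ 2}`. -/
def famW (n s : ℕ) : Finset (Finset ℕ) :=
  (ground n).powerset.filter fun A => 2 ≤ (A ∩ Finset.Icc 1 (2 * s - 1)).card

/-- The `(i ← j)`-shift of a set. -/
def shiftSet (i j : ℕ) (A : Finset ℕ) : Finset ℕ :=
  if j ∈ A ∧ i ∉ A then insert i (A.erase j) else A

/-- The `(i ← j)`-shift of a family. -/
def shiftFam (i j : ℕ) (F : Finset (Finset ℕ)) : Finset (Finset ℕ) :=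
  F.image (shiftSet i j) ∪ F.filter fun A => shiftSet i j A ∈ F

/-- A family `F ⊆ 2^[n]` is shifted if it is invariant under all `(i ← j)`-shifts
with `1 ≤ i < j ≤ n`. -/
def IsShifted (n : ℕ) (F : Finset (Finset ℕ)) : Prop :=
  ∀ i j : ℕ, 1 ≤ i → i < j → j ≤ n → shiftFam i j F = F

/-- `A` can be shifted to `B`: some sequence of `(a ← b)`-shifts with `a < b`
transforms `A` into `B`. -/
def ShiftsTo (n : ℕ) (A B : Finset ℕ) : Prop :=
  Relation.ReflTransGen
    (fun X Y => ∃ a b : ℕ, 1 ≤ a ∧ a < b ∧ b ≤ n ∧ Y = shiftSet a b X) A B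

/-- A family `F ⊆ 2^[n]` is an up-set if it is closed under supersets inside `[n]`. -/
def IsUpSet (n : ℕ) (F : Finset (Finset ℕ)) : Prop :=
  ∀ A ∈ F, ∀ B : Finset ℕ, A ⊆ B → B ⊆ ground n → B ∈ F

/-- The `k`-th layer of a family: its `k`-element members (as subsets of `[n]`). -/
def layer (n : ℕ) (F : Finset (Finset ℕ)) (k : ℕ) : Finset (Finset ℕ) :=
  F ∩ (ground n).powersetCard k

/-- `y_F(k)`: the number of `k`-element subsets of `[n]` that do not belong to `F`. -/
def yF (n : ℕ) (F : Finset (Finset ℕ)) (k : ℕ) : ℕ :=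
  Nat.choose n k - (layer n F k).card

/-- The defining condition for `d(F)` (with parameter `ℓ`). -/
def DCond (l : ℕ) (F : Finset (Finset ℕ)) (d : ℕ) : Prop :=
  (Even d ∧ ∃ i ∈ Finset.Icc 1 (l + d / 2), ({i, 2 * l + d + 1 - i} : Finset ℕ) ∉ F) ∨
  (Odd d ∧ (({1, 2 * l + d} : Finset ℕ) ∉ F ∨
    ∃ i ∈ Finset.Icc 3 (l + (d + 1) / 2), ({i, 2 * l + d + 2 - i} : Finset ℕ) ∉ F))

/-- `d(F)`: the smallest `d ≥ 0` satisfying the condition `DCond ℓ F d`. -/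
noncomputable def dF (l : ℕ) (F : Finset (Finset ℕ)) : ℕ := sInf {d : ℕ | DCond l F d}

/-!
Each family admits a weight `w(A) = a·|A| + b·|A ∩ I|` for a suitable interval `I`, bounded
below by some `k` on every member. For a matching `M` the sets are disjoint, so summing gives
`k·|M| ≤ a·n + b·|I|`, and in each of the four cases the right-hand side is `k·s - 1`:

* `P`:  `|A| + |A ∩ [ℓ-1]| ≥ 3`, and `n + ℓ - 1 = 3s - 1`;
* `P'`: `2|A| + |A ∩ [2ℓ-1]| ≥ 6`, and `2n + 2ℓ - 1 = 6s - 1`;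
* `Q`:  `|A| + |A ∩ [s+ℓ-1]| ≥ 4` (a triple outside `[s+ℓ, n]` meets `[s+ℓ-1]`), and
  `n + s + ℓ - 1 = 4s - 1`;
* `W`:  `|A ∩ [2s-1]| ≥ 2`.
-/

section Weight

variable {α : Type*} [DecidableEq α] {M : Finset (Finset α)}

theorem sum_card_inter_le_of_pairwiseDisjoint (hM : (M : Set (Finset α)).PairwiseDisjoint id)
    (I : Finset α) : ∑ A ∈ M, #(A ∩ I) ≤ #I := by
  rw [← card_biUnion (t := (· ∩ I)) (hM.mono_on fun _ _ => inter_subset_left)]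
  exact card_le_card (biUnion_subset.mpr fun _ _ => inter_subset_right)

theorem mul_card_le_of_pairwiseDisjoint (hM : (M : Set (Finset α)).PairwiseDisjoint id)
    {U I : Finset α} {a b k : ℕ} (hw : ∀ A ∈ M, k ≤ a * #(A ∩ U) + b * #(A ∩ I)) :
    k * #M ≤ a * #U + b * #I :=
  calc k * #M = ∑ _A ∈ M, k := by rw [sum_const, smul_eq_mul, mul_comm]
    _ ≤ ∑ A ∈ M, (a * #(A ∩ U) + b * #(A ∩ I)) := sum_le_sum hw
    _ = a * ∑ A ∈ M, #(A ∩ U) + b * ∑ A ∈ M, #(A ∩ I) := by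
      rw [sum_add_distrib, mul_sum, mul_sum]
    _ ≤ a * #U + b * #I := by
      gcongr <;> exact sum_card_inter_le_of_pairwiseDisjoint hM _

end Weight

theorem matchingNumber_lt_of_weight {F : Finset (Finset ℕ)} {n s a b k : ℕ} (I : Finset ℕ)
    (hw : ∀ A ∈ F, k ≤ a * #(A ∩ ground n) + b * #(A ∩ I))
    (hlt : a * n + b * #I < k * s) : matchingNumber F < s := by
  have hs : 0 < s := Nat.pos_of_ne_zero fun h => by simp [h] at hlt
  rw [matchingNumber, Finset.sup_lt_iff hs]
  intro M hM
  rw [mem_filter, mem_powerset] at hM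
  have hweight := mul_card_le_of_pairwiseDisjoint hM.2 fun A hA => hw A (hM.1 hA)
  rw [ground, Nat.card_Icc, Nat.add_sub_cancel] at hweight
  exact Nat.lt_of_mul_lt_mul_left (hweight.trans_lt hlt)

theorem matchingNumber_famP_lt {n l s : ℕ} (h : n + (l - 1) < 3 * s) :
    matchingNumber (famP n l) < s := by
  refine matchingNumber_lt_of_weight (a := 1) (b := 1) (Icc 1 (l - 1)) (fun A hA => ?_)
    (by simpa using h)
  rw [famP, mem_filter, mem_powerset] at hA
  rw [inter_eq_left.mpr hA.1]
  omega

theorem matchingNumber_famP'_lt {n l s : ℕ} (hl : 2 * l - 1 ≤ n)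
    (h : 2 * n + (2 * l - 1) < 6 * s) : matchingNumber (famP' n l) < s := by
  refine matchingNumber_lt_of_weight (a := 2) (b := 1) (Icc 1 (2 * l - 1)) (fun A hA => ?_)
    (by simpa using h)
  rw [famP', mem_union, mem_filter, mem_powerset, mem_powersetCard] at hA
  rcases hA with ⟨hA, hcard⟩ | ⟨hA, hcard⟩
  · rw [inter_eq_left.mpr hA]
    omega
  · have hAn : A ⊆ ground n := hA.trans (Icc_subset_Icc_right hl)
    rw [inter_eq_left.mpr hAn, inter_eq_left.mpr hA, hcard]

theorem matchingNumber_famQ_lt {n l s : ℕ} (hl : s + l - 1 ≤ n)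
    (h : n + (s + l - 1) < 4 * s) : matchingNumber (famQ n s l) < s := by
  refine matchingNumber_lt_of_weight (a := 1) (b := 1) (Icc 1 (s + l - 1)) (fun A hA => ?_)
    (by simpa using h)
  rw [famQ, mem_sdiff, mem_union, mem_filter, mem_powerset, mem_powersetCard,
    mem_powersetCard] at hA
  obtain ⟨⟨hA, hcard⟩ | ⟨hA, hcard⟩, hnot⟩ := hA
  · rw [inter_eq_left.mpr hA]
    by_cases hcard3 : #A = 3
    · obtain ⟨x, hxA, hx⟩ := not_subset.mp fun hsub => hnot ⟨hsub, hcard3⟩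
      have hxn := mem_Icc.mp (hA hxA)
      rw [mem_Icc] at hx
      have hxI : x ∈ A ∩ Icc 1 (s + l - 1) :=
        mem_inter.mpr ⟨hxA, mem_Icc.mpr ⟨hxn.1, by omega⟩⟩
      have := card_pos.mpr ⟨x, hxI⟩
      omega
    · omega
  · have hAn : A ⊆ ground n := hA.trans (Icc_subset_Icc_right hl)
    rw [inter_eq_left.mpr hAn, inter_eq_left.mpr hA, hcard]

theorem matchingNumber_famW_lt {n s : ℕ} (hs : 0 < s) : matchingNumber (famW n s) < s :=
  matchingNumber_lt_of_weight (n := n) (a := 0) (b := 1) (Icc 1 (2 * s - 1))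
    (fun A hA => by simpa using (mem_filter.mp hA).2) (by rw [Nat.card_Icc]; omega)

theorem stmt_4_general (n s l : ℕ) (hl0 : 1 ≤ l) (hls : l ≤ s - 1) (hn2 : n + l = 3 * s) :
    matchingNumber (famP n l) < s ∧ matchingNumber (famP' n l) < s ∧
      matchingNumber (famQ n s l) < s ∧ matchingNumber (famW n s) < s :=
  ⟨matchingNumber_famP_lt (by omega), matchingNumber_famP'_lt (by omega) (by omega),
    matchingNumber_famQ_lt (by omega) (by omega), matchingNumber_famW_lt (by omega)⟩

theorem stmt_4 (n s l c : ℕ) (hn0 : 0 < n) (hs0 : 0 < s) (hl0 : 1 ≤ l) (hc0 : 1 ≤ c)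
    (hls : l ≤ s - 1) (hcs : c ≤ s - 1) (hn1 : n = 2 * s + c) (hn2 : n + l = 3 * s) :
    matchingNumber (famP n l) < s ∧ matchingNumber (famP' n l) < s ∧
      matchingNumber (famQ n s l) < s ∧ matchingNumber (famW n s) < s :=
  stmt_4_general n s l hl0 hls hn2
end

section
/- If F ⊆ 2^[n] is a shifted family and {i,j} ∉ F with i < j, then y_F(2) ≥ (n+j-2i)(n-j+1)/2. Moreover, equality is achieved only if F^{(2)} (the family of 2-element sets of F) consists exactly of all two-element subsets of [n] that cannot be transformed into {i,j} by a sequence of (a←b)-shifts with a<b. -/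
open Finset

/-!
A shift moves one element down, so the 2-sets that can be shifted to `{i, j}` are exactly
the pairs `{a, b} ⊆ [n]` with `i ≤ a < b` and `j ≤ b`; there are
`∑_{b=j}^{n} (b - i) = (n + j - 2i)(n - j + 1)/2` of them. A shifted family containing one of
them contains `{i, j}`, so `F^{(2)}` misses all of them, with equality exactly when it
contains every other 2-subset of `[n]`.
-/

lemma card_shiftSet (p q : ℕ) (X : Finset ℕ) : #(shiftSet p q X) = #X := by
  unfold shiftSet
  split_ifs with h
  · rw [card_insert_of_notMem fun hp => h.2 (mem_of_mem_erase hp), card_erase_add_one h.1]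
  · rfl

lemma exists_mem_shiftSet_le {p q x : ℕ} {X : Finset ℕ} (hpq : p ≤ q) (hx : x ∈ X) :
    ∃ y ∈ shiftSet p q X, y ≤ x := by
  unfold shiftSet
  split_ifs with h
  · by_cases hxq : x = q
    · exact ⟨p, mem_insert_self _ _, hxq ▸ hpq⟩
    · exact ⟨x, mem_insert_of_mem (mem_erase.2 ⟨hxq, hx⟩), le_rfl⟩
  · exact ⟨x, hx, le_rfl⟩

lemma exists_mem_le_of_mem_shiftSet {p q y : ℕ} {X : Finset ℕ} (hpq : p ≤ q)
    (hy : y ∈ shiftSet p q X) : ∃ x ∈ X, y ≤ x := by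
  unfold shiftSet at hy
  split_ifs at hy with h
  · rcases mem_insert.1 hy with rfl | hy
    · exact ⟨q, h.1, hpq⟩
    · exact ⟨y, mem_of_mem_erase hy, le_rfl⟩
  · exact ⟨y, hy, le_rfl⟩

lemma shiftSet_insert {p q : ℕ} {s : Finset ℕ} (hpq : p ≠ q) (hp : p ∉ s) (hq : q ∉ s) :
    shiftSet p q (insert q s) = insert p s := by
  unfold shiftSet
  rw [if_pos ⟨mem_insert_self _ _, by simp [hpq, hp]⟩, erase_insert hq]

lemma ShiftsTo.card_eq_and_dominates {n : ℕ} {A B : Finset ℕ} (h : ShiftsTo n A B) :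
    #A = #B ∧ (∀ x ∈ A, ∃ y ∈ B, y ≤ x) ∧ ∀ y ∈ B, ∃ x ∈ A, y ≤ x := by
  induction h with
  | refl => exact ⟨rfl, fun x hx => ⟨x, hx, le_rfl⟩, fun y hy => ⟨y, hy, le_rfl⟩⟩
  | tail _ hstep ih =>
    obtain ⟨p, q, -, hpq, -, rfl⟩ := hstep
    obtain ⟨hcard, hdown, hup⟩ := ih
    refine ⟨hcard.trans (card_shiftSet p q _).symm, fun x hx => ?_, fun y hy => ?_⟩
    · obtain ⟨z, hz, hzx⟩ := hdown x hx
      obtain ⟨y, hy, hyz⟩ := exists_mem_shiftSet_le hpq.le hz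
      exact ⟨y, hy, hyz.trans hzx⟩
    · obtain ⟨z, hz, hyz⟩ := exists_mem_le_of_mem_shiftSet hpq.le hy
      obtain ⟨x, hx, hzx⟩ := hup z hz
      exact ⟨x, hx, hyz.trans hzx⟩

lemma pair_shiftsTo {n i j a b : ℕ} (hi : 1 ≤ i) (hij : i < j)
    (hia : i ≤ a) (hab : a < b) (hjb : j ≤ b) (hbn : b ≤ n) :
    ShiftsTo n ({a, b} : Finset ℕ) {i, j} := by
  have shift_left : ShiftsTo n ({a, b} : Finset ℕ) {i, b} := by
    rcases hia.eq_or_lt with rfl | hia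
    · exact .refl
    · refine .single ⟨i, a, hi, hia, by omega, ?_⟩
      rw [shiftSet_insert hia.ne (by simp; omega) (by simp; omega)]
  have shift_right : ShiftsTo n ({i, b} : Finset ℕ) {i, j} := by
    rcases hjb.eq_or_lt with rfl | hjb
    · exact .refl
    · refine .single ⟨j, b, by omega, hjb, hbn, ?_⟩
      rw [pair_comm i b, shiftSet_insert hjb.ne (by simp; omega) (by simp; omega), pair_comm]
  exact shift_left.trans shift_right

lemma pair_injOn_lt :
    Set.InjOn (fun p : (_ : ℕ) × ℕ => ({p.2, p.1} : Finset ℕ)) {p | p.2 < p.1} := by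
  rintro ⟨b, a⟩ (hab : a < b) ⟨b', a'⟩ (hab' : a' < b') h
  simp only [← coe_inj, coe_pair, Set.pair_eq_pair_iff] at h
  simp only [Sigma.mk.injEq, heq_eq_eq]
  omega

lemma exists_lt_eq_pair_of_card_eq_two {A : Finset ℕ} (h : #A = 2) :
    ∃ a b, a < b ∧ A = {a, b} := by
  obtain ⟨x, y, hxy, rfl⟩ := card_eq_two.1 h
  rcases hxy.lt_or_gt with hlt | hlt
  · exact ⟨x, y, hlt, rfl⟩
  · exact ⟨y, x, hlt, pair_comm x y⟩

open Classical in
lemma filter_shiftsTo_pair_eq_image {n i j : ℕ} (hi : 1 ≤ i) (hij : i < j) :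
    ((ground n).powersetCard 2).filter (fun A => ShiftsTo n A {i, j}) =
      ((Icc j n).sigma fun b => Ico i b).image fun p => ({p.2, p.1} : Finset ℕ) := by
  ext A
  simp only [mem_filter, mem_powersetCard, mem_image, mem_sigma, mem_Icc, mem_Ico,
    Sigma.exists]
  constructor
  · rintro ⟨⟨hA, hcard⟩, hshift⟩
    obtain ⟨-, hdown, hup⟩ := hshift.card_eq_and_dominates
    obtain ⟨x, y, hlt, rfl⟩ := exists_lt_eq_pair_of_card_eq_two hcard
    have hin : ∀ z ∈ ({x, y} : Finset ℕ), i ≤ z ∧ z ≤ n := fun z hz => by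
      obtain ⟨w, hw, hwz⟩ := hdown z hz
      have := mem_Icc.1 (hA hz)
      simp only [mem_insert, mem_singleton] at hw
      omega
    obtain ⟨z, hz, hjz⟩ := hup j (by simp)
    have hx := hin x (by simp)
    have hy := hin y (by simp)
    simp only [mem_insert, mem_singleton] at hz
    exact ⟨y, x, ⟨⟨by omega, hy.2⟩, hx.1, hlt⟩, rfl⟩
  · rintro ⟨b, a, ⟨⟨hjb, hbn⟩, hia, hab⟩, rfl⟩
    refine ⟨⟨fun z hz => ?_, card_pair hab.ne⟩, pair_shiftsTo hi hij hia hab hjb hbn⟩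
    simp only [mem_insert, mem_singleton] at hz
    rw [ground, mem_Icc]
    omega

lemma two_mul_sum_Icc_sub {i j n : ℕ} (hij : i ≤ j) (hjn : j ≤ n) :
    2 * ∑ b ∈ Icc j n, (b - i) = (n + j - 2 * i) * (n - j + 1) := by
  induction n, hjn using Nat.le_induction with
  | base => rw [Icc_self, sum_singleton, Nat.sub_self, zero_add, mul_one]; omega
  | succ n hjn ih =>
    rw [sum_Icc_succ_top (by omega), mul_add, ih]
    obtain ⟨d, rfl⟩ : ∃ d, j = i + d := ⟨j - i, by omega⟩
    obtain ⟨m, rfl⟩ : ∃ m, n = i + d + m := ⟨n - (i + d), by omega⟩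
    rw [show i + d + m + (i + d) - 2 * i = m + 2 * d by omega,
      show i + d + m + 1 + (i + d) - 2 * i = m + 2 * d + 1 by omega,
      show i + d + m - (i + d) + 1 = m + 1 by omega,
      show i + d + m + 1 - (i + d) + 1 = m + 2 by omega,
      show i + d + m + 1 - i = m + d + 1 by omega]
    ring

open Classical in
lemma card_filter_shiftsTo_pair {n i j : ℕ} (hi : 1 ≤ i) (hij : i < j) (hj : j ≤ n) :
    #(((ground n).powersetCard 2).filter fun A => ShiftsTo n A {i, j}) =
      (n + j - 2 * i) * (n - j + 1) / 2 := by
  rw [filter_shiftsTo_pair_eq_image hi hij,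
    card_image_of_injOn (pair_injOn_lt.mono fun p hp => (mem_Ico.1 (mem_sigma.1 hp).2).2),
    card_sigma, ← two_mul_sum_Icc_sub (n := n) hij.le hj]
  simp only [Nat.card_Ico]
  omega

lemma IsShifted.mem_of_shiftsTo {n : ℕ} {F : Finset (Finset ℕ)} (hsh : IsShifted n F)
    {A B : Finset ℕ} (h : ShiftsTo n A B) (hA : A ∈ F) : B ∈ F := by
  induction h with
  | refl => exact hA
  | tail _ hstep ih =>
    obtain ⟨a, b, ha, hab, hbn, rfl⟩ := hstep
    rw [← hsh a b ha hab hbn]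
    exact mem_union_left _ (mem_image_of_mem _ ih)

open Classical in
lemma IsShifted.layer_subset_filter_not_shiftsTo {n k : ℕ} {F : Finset (Finset ℕ)}
    (hsh : IsShifted n F) {B : Finset ℕ} (hB : B ∉ F) :
    layer n F k ⊆ ((ground n).powersetCard k).filter fun A => ¬ ShiftsTo n A B :=
  fun _ hA => mem_filter.2
    ⟨(mem_inter.1 hA).2, fun h => hB (hsh.mem_of_shiftsTo h (mem_inter.1 hA).1)⟩

open Classical in
theorem stmt_5_general (n i j : ℕ) (hi : 1 ≤ i) (hij : i < j) (hj : j ≤ n)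
    (F : Finset (Finset ℕ)) (hsh : IsShifted n F)
    (hmem : ({i, j} : Finset ℕ) ∉ F) :
    (n + j - 2 * i) * (n - j + 1) / 2 ≤ yF n F 2 ∧
      (yF n F 2 = (n + j - 2 * i) * (n - j + 1) / 2 →
        layer n F 2 =
          ((ground n).powersetCard 2).filter fun A => ¬ ShiftsTo n A {i, j}) := by
  have hsub := hsh.layer_subset_filter_not_shiftsTo (k := 2) hmem
  have hsplit : #(((ground n).powersetCard 2).filter fun A => ¬ ShiftsTo n A {i, j}) +
      (n + j - 2 * i) * (n - j + 1) / 2 = n.choose 2 := by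
    rw [← card_filter_shiftsTo_pair hi hij hj, add_comm, card_filter_add_card_filter_not,
      card_powersetCard, ground, Nat.card_Icc, Nat.add_sub_cancel]
  have hle := card_le_card hsub
  unfold yF
  exact ⟨by omega, fun heq => eq_of_subset_of_card_le hsub (by omega)⟩

open Classical in
theorem stmt_5 (n i j : ℕ) (hi : 1 ≤ i) (hij : i < j) (hj : j ≤ n)
    (F : Finset (Finset ℕ)) (hF : ∀ A ∈ F, A ⊆ ground n) (hsh : IsShifted n F)
    (hmem : ({i, j} : Finset ℕ) ∉ F) :
    (n + j - 2 * i) * (n - j + 1) / 2 ≤ yF n F 2 ∧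
      (yF n F 2 = (n + j - 2 * i) * (n - j + 1) / 2 →
        layer n F 2 =
          ((ground n).powersetCard 2).filter fun A => ¬ ShiftsTo n A {i, j}) :=
  stmt_5_general n i j hi hij hj F hsh hmem
end

section
/- Let s,ℓ,c be positive integers with c+ℓ=s and n=3s-ℓ=2ℓ+3c, and let d be a positive odd integer with d ≤ 2c. If F ⊆ 2^[n] is a shifted family with d(F) = d, then y_F(2) ≥ min{(4ℓ+3c+d−2)(3c−d+1)/2, (ℓ+3c−(d−1)/2)(ℓ+3c−(d+1)/2)/2}. Moreover, equality is achieved only if F^{(2)} = ([2ℓ+d−1] choose 2) or F^{(2)} = {F ∈ ([n] choose 2) : F ∩ [ℓ+(d−1)/2] ≠ ∅}. -/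
open Finset

/-! A shifted family that misses the pair `{p, q}` (`p < q`) misses every pair `{a, b}` with
`p ≤ a < b` and `q ≤ b`, since shifting moves such a pair onto `{p, q}`. For odd `d = d(F)` the
definition of `d(F)` supplies a missing pair: either `{1, 2ℓ + d}`, whose forced missing pairs
number exactly the first bound, or `{i, 2ℓ + d + 2 - i}` with `3 ≤ i ≤ ℓ + (d + 1)/2`. In the
second case the count is a concave quadratic in `i`; it equals the second bound at the top
endpoint and exceeds the minimum everywhere else. If the bound is attained, the missing pairs are
exactly the forced ones. -/

lemma shiftSet_pair {i j b : ℕ} (hij : i ≠ j) (hib : i ≠ b) (hjb : j ≠ b) :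
    shiftSet i j {j, b} = {i, b} := by
  rw [shiftSet, if_pos (by simp [hij, hib]), erase_insert (by simpa using hjb)]

namespace IsShifted

variable {n : ℕ} {F : Finset (Finset ℕ)}

lemma shiftSet_mem (hsh : IsShifted n F) {i j : ℕ} (hi : 1 ≤ i) (hij : i < j) (hjn : j ≤ n)
    {A : Finset ℕ} (hA : A ∈ F) : shiftSet i j A ∈ F := by
  rw [← hsh i j hi hij hjn]
  exact mem_union_left _ (mem_image_of_mem _ hA)

lemma pair_mem_of_le_left (hsh : IsShifted n F) {p a b : ℕ} (hp : 1 ≤ p) (hpa : p ≤ a)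
    (han : a ≤ n) (hpb : p ≠ b) (hab : a ≠ b) (h : {a, b} ∈ F) : {p, b} ∈ F := by
  obtain rfl | hpa := hpa.eq_or_lt
  · exact h
  · simpa [shiftSet_pair hpa.ne hpb hab] using hsh.shiftSet_mem hp hpa han h

lemma pair_mem_of_le (hsh : IsShifted n F) {p q a b : ℕ} (hp : 1 ≤ p) (hpq : p < q)
    (hpa : p ≤ a) (hqb : q ≤ b) (hab : a < b) (hbn : b ≤ n) (h : {a, b} ∈ F) :
    {p, q} ∈ F := by
  have hpb : {p, b} ∈ F := hsh.pair_mem_of_le_left hp hpa (by omega) (by omega) hab.ne h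
  rw [pair_comm] at hpb ⊢
  exact hsh.pair_mem_of_le_left (by omega) hqb hbn hpq.ne' (by omega) hpb

end IsShifted

/-- The pairs `{a, b}` with `p ≤ a < b` and `q ≤ b`. -/
def pairsAbove (n p q : ℕ) : Finset (Finset ℕ) :=
  (Icc p n).powersetCard 2 \ (Icc p (q - 1)).powersetCard 2

lemma two_mul_choose_two_eq (m : ℕ) : (2 * m.choose 2 : ℤ) = m * (m - 1) := by
  have h : 2 * m.choose 2 = m * (m - 1) := by
    rw [Nat.choose_two_right, Nat.mul_div_cancel' (Nat.even_mul_pred_self m).two_dvd]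
  obtain rfl | hm := m.eq_zero_or_pos
  · simp
  · have h := congrArg (Nat.cast : ℕ → ℤ) h
    push_cast [Nat.cast_sub hm] at h
    exact h

lemma two_mul_card_pairsAbove {n p q : ℕ} (hpq : p < q) (hqn : q ≤ n) :
    (2 * #(pairsAbove n p q) : ℤ) = (n + 1 - p) * (n - p) - (q - p) * (q - p - 1) := by
  have hsub : (Icc p (q - 1)).powersetCard 2 ⊆ (Icc p n).powersetCard 2 :=
    powersetCard_mono (Icc_subset_Icc_right (by omega))
  rw [pairsAbove, card_sdiff_of_subset hsub, Nat.cast_sub (card_le_card hsub), mul_sub,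
    card_powersetCard, card_powersetCard, Nat.card_Icc, Nat.card_Icc,
    show q - 1 + 1 - p = q - p by omega, two_mul_choose_two_eq, two_mul_choose_two_eq,
    Nat.cast_sub (by omega), Nat.cast_sub (by omega)]
  push_cast
  ring

lemma yF_eq_card_sdiff (n : ℕ) (F : Finset (Finset ℕ)) (k : ℕ) :
    yF n F k = #((ground n).powersetCard k \ layer n F k) := by
  have hsub : layer n F k ⊆ (ground n).powersetCard k := inter_subset_right
  rw [yF, card_sdiff_of_subset hsub, card_powersetCard, ground, Nat.card_Icc,
    Nat.add_sub_cancel]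

namespace IsShifted

variable {n : ℕ} {F : Finset (Finset ℕ)}

lemma pairsAbove_subset_sdiff_layer (hsh : IsShifted n F) {p q : ℕ} (hp : 1 ≤ p)
    (hpq : p < q) (hF : {p, q} ∉ F) :
    pairsAbove n p q ⊆ (ground n).powersetCard 2 \ layer n F 2 := by
  intro A hA
  obtain ⟨⟨hAn, hA2⟩, hAq⟩ : (A ⊆ Icc p n ∧ #A = 2) ∧ ¬(A ⊆ Icc p (q - 1) ∧ #A = 2) := by
    simpa [pairsAbove] using hA
  obtain ⟨a, b, hab, rfl⟩ := card_eq_two.mp hA2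
  have ha := mem_Icc.mp (hAn (mem_insert_self a {b}))
  have hb := mem_Icc.mp (hAn (mem_insert_of_mem (mem_singleton_self b)))
  have hground : {a, b} ⊆ ground n := hAn.trans (Icc_subset_Icc_left hp)
  refine mem_sdiff.mpr ⟨mem_powersetCard.mpr ⟨hground, hA2⟩, fun hmem => hF ?_⟩
  have hmem : {a, b} ∈ F := (mem_inter.mp hmem).1
  have hqab : q ≤ a ∨ q ≤ b := by
    by_contra! h
    exact hAq ⟨insert_subset_iff.mpr ⟨mem_Icc.mpr (by omega),
      singleton_subset_iff.mpr (mem_Icc.mpr (by omega))⟩, hA2⟩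
  rcases hab.lt_or_gt with hab | hba
  · exact hsh.pair_mem_of_le hp hpq ha.1 (by omega) hab hb.2 hmem
  · exact hsh.pair_mem_of_le hp hpq hb.1 (by omega) hba ha.2 (pair_comm a b ▸ hmem)

lemma card_pairsAbove_le_yF (hsh : IsShifted n F) {p q : ℕ} (hp : 1 ≤ p) (hpq : p < q)
    (hF : {p, q} ∉ F) : #(pairsAbove n p q) ≤ yF n F 2 :=
  yF_eq_card_sdiff n F 2 ▸ card_le_card (hsh.pairsAbove_subset_sdiff_layer hp hpq hF)

lemma layer_two_eq_of_yF_eq (hsh : IsShifted n F) {p q : ℕ} (hp : 1 ≤ p) (hpq : p < q)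
    (hF : {p, q} ∉ F) (hy : yF n F 2 = #(pairsAbove n p q)) :
    layer n F 2 = (ground n).powersetCard 2 \ pairsAbove n p q := by
  have hsub := hsh.pairsAbove_subset_sdiff_layer hp hpq hF
  rw [yF_eq_card_sdiff] at hy
  rw [eq_of_subset_of_card_le hsub hy.le]
  exact (Finset.sdiff_sdiff_eq_self inter_subset_right).symm

end IsShifted

lemma powersetCard_two_sdiff_pairsAbove_one {n q : ℕ} (hqn : q ≤ n) :
    (ground n).powersetCard 2 \ pairsAbove n 1 q = (Icc 1 (q - 1)).powersetCard 2 :=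
  Finset.sdiff_sdiff_eq_self (powersetCard_mono (Icc_subset_Icc_right (by omega)))

lemma powersetCard_two_sdiff_pairsAbove_succ (n p : ℕ) :
    (ground n).powersetCard 2 \ pairsAbove n p (p + 1) =
      ((ground n).powersetCard 2).filter fun A => (A ∩ Icc 1 (p - 1)).Nonempty := by
  ext A
  simp only [pairsAbove, Nat.add_sub_cancel, Icc_self, powersetCard_eq_empty.mpr
    (by simp : #{p} < 2), sdiff_empty, mem_sdiff, mem_filter, mem_powersetCard, ground]
  refine and_congr_right fun ⟨hA, hA2⟩ => ⟨fun h => ?_, ?_⟩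
  · obtain ⟨x, hxA, hx⟩ := not_subset.mp fun h' => h ⟨h', hA2⟩
    have hx1 := mem_Icc.mp (hA hxA)
    rw [mem_Icc] at hx
    exact ⟨x, mem_inter.mpr ⟨hxA, mem_Icc.mpr (by omega)⟩⟩
  · rintro ⟨x, hx⟩ ⟨h, -⟩
    have h1 := mem_Icc.mp (h (mem_inter.mp hx).1)
    have h2 := mem_Icc.mp (mem_inter.mp hx).2
    omega

lemma dCond_dF {l : ℕ} {F : Finset (Finset ℕ)} (h : 0 < dF l F) : DCond l F (dF l F) :=
  Nat.sInf_mem (Nat.nonempty_of_pos_sInf h)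

/-- Twice the lower bound on `y_F(2)`. -/
def yBound (l c d : ℤ) : ℤ :=
  min ((4 * l + 3 * c + d - 2) * (3 * c - d + 1))
    ((l + 3 * c - (d - 1) / 2) * (l + 3 * c - (d + 1) / 2))

lemma yBound_two_mul_add_one (l c k : ℤ) :
    yBound l c (2 * k + 1) =
      min ((4 * l + 3 * c + 2 * k - 1) * (3 * c - 2 * k))
        ((l + 3 * c - k) * (l + 3 * c - k - 1)) := by
  rw [yBound, show (2 * k + 1 - 1) / 2 = k by omega, show (2 * k + 1 + 1) / 2 = k + 1 by omega]
  ring_nf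

-- The right-hand side is `2 * #(pairsAbove (2 * l + 3 * c) i (2 * l + 2 * k + 3 - i))`,
-- a concave quadratic in `i`.
lemma yBound_lt {l c k i : ℤ} (hk : 0 ≤ k) (hkc : k + 1 ≤ c) (hi : 3 ≤ i) (hil : i ≤ l + k) :
    yBound l c (2 * k + 1) < (2 * l + 3 * c + 1 - i) * (2 * l + 3 * c - i)
      - (2 * l + 2 * k + 3 - 2 * i) * (2 * l + 2 * k + 2 - 2 * i) := by
  rw [yBound_two_mul_add_one]
  rcases le_total ((4 * l + 3 * c + 2 * k - 1) * (3 * c - 2 * k))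
    ((l + 3 * c - k) * (l + 3 * c - k - 1)) with h | h
  · refine (min_le_left _ _).trans_lt ?_
    nlinarith [mul_nonneg (sub_nonneg.2 hi) (sub_nonneg.2 hil), sq_nonneg (c - k - 1),
      mul_nonneg (sub_nonneg.2 hi) (sub_nonneg.2 hkc)]
  · refine (min_le_right _ _).trans_lt ?_
    nlinarith [mul_nonneg (sub_nonneg.2 hi) (sub_nonneg.2 hil), sq_nonneg (c - k - 1),
      mul_nonneg (sub_nonneg.2 hi) (sub_nonneg.2 hkc)]

lemma yBound_le {l c k i : ℤ} (hk : 0 ≤ k) (hkc : k + 1 ≤ c) (hi : 3 ≤ i)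
    (hil : i ≤ l + k + 1) :
    yBound l c (2 * k + 1) ≤ (2 * l + 3 * c + 1 - i) * (2 * l + 3 * c - i)
      - (2 * l + 2 * k + 3 - 2 * i) * (2 * l + 2 * k + 2 - 2 * i) := by
  rcases hil.lt_or_eq with hil | rfl
  · exact (yBound_lt hk hkc hi (by omega)).le
  · rw [yBound_two_mul_add_one]
    exact (min_le_right _ _).trans (le_of_eq (by ring))

namespace IsShifted

variable {n l c d : ℕ} {F : Finset (Finset ℕ)}

lemma yBound_le_of_notMem_one (hsh : IsShifted n F) (hn : n = 2 * l + 3 * c) (hl : 0 < l)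
    (hd : Odd d) (hdc : d ≤ 2 * c) (hF : {1, 2 * l + d} ∉ F) :
    yBound l c d ≤ 2 * yF n F 2 ∧
      (2 * yF n F 2 = yBound l c d → layer n F 2 = (Icc 1 (2 * l + d - 1)).powersetCard 2) := by
  obtain ⟨k, rfl⟩ := hd
  have hcount : yBound l c ↑(2 * k + 1) ≤ 2 * #(pairsAbove n 1 (2 * l + (2 * k + 1))) := by
    rw [two_mul_card_pairsAbove (by omega) (by omega), hn]
    push_cast
    rw [yBound_two_mul_add_one]
    exact (min_le_left _ _).trans (le_of_eq (by ring))
  have hle : (#(pairsAbove n 1 (2 * l + (2 * k + 1))) : ℤ) ≤ yF n F 2 :=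
    mod_cast hsh.card_pairsAbove_le_yF le_rfl (by omega) hF
  refine ⟨by omega, fun heq => ?_⟩
  rw [hsh.layer_two_eq_of_yF_eq le_rfl (by omega) hF (by omega),
    powersetCard_two_sdiff_pairsAbove_one (by omega)]

lemma yBound_le_of_notMem {i : ℕ} (hsh : IsShifted n F) (hn : n = 2 * l + 3 * c)
    (hd : Odd d) (hdc : d ≤ 2 * c) (hi : 3 ≤ i) (hil : i ≤ l + (d + 1) / 2)
    (hF : {i, 2 * l + d + 2 - i} ∉ F) :
    yBound l c d ≤ 2 * yF n F 2 ∧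
      (2 * yF n F 2 = yBound l c d → layer n F 2 =
        ((ground n).powersetCard 2).filter fun A => (A ∩ Icc 1 (l + (d - 1) / 2)).Nonempty) := by
  obtain ⟨k, rfl⟩ := hd
  have hcount : (2 * l + 3 * c + 1 - i) * (2 * l + 3 * c - i)
      - (2 * l + 2 * k + 3 - 2 * i) * (2 * l + 2 * k + 2 - 2 * i)
      = 2 * (#(pairsAbove n i (2 * l + (2 * k + 1) + 2 - i)) : ℤ) := by
    rw [two_mul_card_pairsAbove (by omega) (by omega), hn]
    push_cast [show i ≤ 2 * l + (2 * k + 1) + 2 by omega]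
    ring
  have hle : (#(pairsAbove n i (2 * l + (2 * k + 1) + 2 - i)) : ℤ) ≤ yF n F 2 :=
    mod_cast hsh.card_pairsAbove_le_yF (by omega) (by omega) hF
  have hbound := yBound_le (l := l) (c := c) (by omega) (by omega) (by omega)
    (by omega : (i : ℤ) ≤ l + k + 1)
  rw [show ((2 * k + 1 : ℕ) : ℤ) = 2 * k + 1 by push_cast; ring]
  refine ⟨by omega, fun heq => ?_⟩
  obtain rfl : i = l + k + 1 := by
    by_contra hne
    have := yBound_lt (l := l) (c := c) (by omega) (by omega) (by omega)
      (by omega : (i : ℤ) ≤ l + k)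
    omega
  rw [hsh.layer_two_eq_of_yF_eq (by omega) (by omega) hF (by omega),
    show 2 * l + (2 * k + 1) + 2 - (l + k + 1) = l + k + 1 + 1 by omega,
    powersetCard_two_sdiff_pairsAbove_succ, show l + k + 1 - 1 = l + (2 * k + 1 - 1) / 2 by omega]

end IsShifted

theorem stmt_9_general (n l c d : ℕ) (hl0 : 0 < l)
    (hn : n = 2 * l + 3 * c) (hd : Odd d)
    (hd2c : d ≤ 2 * c)
    (F : Finset (Finset ℕ)) (hsh : IsShifted n F)
    (hdF : dF l F = d) :
    min ((4 * (l : ℤ) + 3 * (c : ℤ) + (d : ℤ) - 2) * (3 * (c : ℤ) - (d : ℤ) + 1))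
        (((l : ℤ) + 3 * (c : ℤ) - ((d : ℤ) - 1) / 2) * ((l : ℤ) + 3 * (c : ℤ) - ((d : ℤ) + 1) / 2))
      ≤ 2 * (yF n F 2 : ℤ) ∧
    (2 * (yF n F 2 : ℤ) =
        min ((4 * (l : ℤ) + 3 * (c : ℤ) + (d : ℤ) - 2) * (3 * (c : ℤ) - (d : ℤ) + 1))
          (((l : ℤ) + 3 * (c : ℤ) - ((d : ℤ) - 1) / 2) * ((l : ℤ) + 3 * (c : ℤ) - ((d : ℤ) + 1) / 2)) →
      layer n F 2 = (Finset.Icc 1 (2 * l + d - 1)).powersetCard 2 ∨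
      layer n F 2 = ((ground n).powersetCard 2).filter
        fun A => (A ∩ Finset.Icc 1 (l + (d - 1) / 2)).Nonempty) := by
  have hDC : DCond l F d := hdF ▸ dCond_dF (hdF ▸ hd.pos)
  rcases hDC with ⟨heven, -⟩ | ⟨-, hF | ⟨i, hi, hF⟩⟩
  · exact absurd heven (Nat.not_even_iff_odd.mpr hd)
  · exact (hsh.yBound_le_of_notMem_one hn hl0 hd hd2c hF).imp_right fun h heq => .inl (h heq)
  · obtain ⟨hi3, hil⟩ := mem_Icc.mp hi
    exact (hsh.yBound_le_of_notMem hn hd hd2c hi3 hil hF).imp_right fun h heq => .inr (h heq)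

theorem stmt_9 (n s l c d : ℕ) (hs0 : 0 < s) (hl0 : 0 < l) (hc0 : 0 < c)
    (hcl : c + l = s) (hn : n = 2 * l + 3 * c) (hd : Odd d) (hd0 : 0 < d)
    (hd2c : d ≤ 2 * c)
    (F : Finset (Finset ℕ)) (hF : ∀ A ∈ F, A ⊆ ground n) (hsh : IsShifted n F)
    (hdF : dF l F = d) :
    min ((4 * (l : ℤ) + 3 * (c : ℤ) + (d : ℤ) - 2) * (3 * (c : ℤ) - (d : ℤ) + 1))
        (((l : ℤ) + 3 * (c : ℤ) - ((d : ℤ) - 1) / 2) * ((l : ℤ) + 3 * (c : ℤ) - ((d : ℤ) + 1) / 2))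
      ≤ 2 * (yF n F 2 : ℤ) ∧
    (2 * (yF n F 2 : ℤ) =
        min ((4 * (l : ℤ) + 3 * (c : ℤ) + (d : ℤ) - 2) * (3 * (c : ℤ) - (d : ℤ) + 1))
          (((l : ℤ) + 3 * (c : ℤ) - ((d : ℤ) - 1) / 2) * ((l : ℤ) + 3 * (c : ℤ) - ((d : ℤ) + 1) / 2)) →
      layer n F 2 = (Finset.Icc 1 (2 * l + d - 1)).powersetCard 2 ∨
      layer n F 2 = ((ground n).powersetCard 2).filter
        fun A => (A ∩ Finset.Icc 1 (l + (d - 1) / 2)).Nonempty) :=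
  stmt_9_general n l c d hl0 hn hd hd2c F hsh hdF
end

section
/- Let s,ℓ,c be positive integers with c+ℓ=s and n=3s-ℓ=2ℓ+3c. Let F ⊆ 2^[n] be a shifted family with ν(F) < s. Suppose d(F) ≥ d, where d ≤ c+1 and d is odd. If ν(F ∩ ([2ℓ+d, n] choose 3)) ≥ c−d+1, then y_F(3) ≥ (2ℓ+d−1)(2d−3). -/
open Finset

/-!
Write `d = 2t + 1` and `N = 2ℓ + 2t`. Since `d(F) > 2t`, every antipodal pair `{i, N + 1 - i}`
with `i ≤ ℓ + t` lies in `F`. Removing from `[N + 1, n]` the points of `c + 1 - d` disjoint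
triples of `F` leaves a block `B` of `4t` points, and since `ν(F) < s`, every matching of `F`
inside `[N] ∪ B` has fewer than `ℓ + 2t` members.

For a perfect matching `P` of `B`, at most `N(2t - 1)` of the triples `{x} ∪ e` with `x ∈ [N]`,
`e ∈ P` lie in `F`: otherwise, as `F` is shifted, a greedy selection and Hall's theorem trade `t`
antipodal pairs for `2t` disjoint such triples, giving a matching of size `ℓ + 2t`. Averaging over
the perfect matchings of `B`, at most `(4t - 1)(2t - 1)N` of all `N · C(4t, 2)` triples
`{x} ∪ e` lie in `F`, so at least `N(4t - 1) = (2ℓ + d - 1)(2d - 3)` triples are missing.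
-/

def IsMatching {α : Type*} (M : Finset (Finset α)) : Prop :=
  (M : Set (Finset α)).PairwiseDisjoint id

theorem card_le_matchingNumber {F M : Finset (Finset ℕ)} (hMF : M ⊆ F) (hM : IsMatching M) :
    #M ≤ matchingNumber F :=
  le_sup (f := card) (mem_filter.2 ⟨mem_powerset.2 hMF, hM⟩)

theorem exists_isMatching_card_eq {F : Finset (Finset ℕ)} {k : ℕ} (hk : k ≤ matchingNumber F) :
    ∃ M ⊆ F, IsMatching M ∧ #M = k := by
  obtain rfl | hk0 := k.eq_zero_or_pos
  · exact ⟨∅, empty_subset _, by simp [IsMatching], rfl⟩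
  obtain ⟨M, hM, hMk⟩ := (Finset.le_sup_iff hk0).1 hk
  rw [mem_filter, mem_powerset] at hM
  obtain ⟨M', hM'M, rfl⟩ := exists_subset_card_eq hMk
  exact ⟨M', hM'M.trans hM.1, Set.Pairwise.mono (coe_subset.2 hM'M) hM.2, rfl⟩

theorem card_add_card_le_matchingNumber {F M₁ M₂ : Finset (Finset ℕ)} (h₁ : M₁ ⊆ F)
    (h₂ : M₂ ⊆ F) (hM₁ : IsMatching M₁) (hM₂ : IsMatching M₂) (hne : ∀ A ∈ M₂, A.Nonempty)
    (hdisj : ∀ A ∈ M₁, ∀ B ∈ M₂, Disjoint A B) :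
    #M₁ + #M₂ ≤ matchingNumber F := by
  have hM : Disjoint M₁ M₂ := disjoint_left.2 fun A hA₁ hA₂ =>
    (hne A hA₂).ne_empty (disjoint_self.1 (hdisj A hA₁ A hA₂))
  rw [← card_union_of_disjoint hM]
  refine card_le_matchingNumber (union_subset h₁ h₂) ?_
  rw [IsMatching, coe_union, Set.pairwiseDisjoint_union]
  exact ⟨hM₁, hM₂, fun A hA B hB _ => hdisj A hA B hB⟩

theorem isMatching_image_of_pairwiseDisjoint {ι α : Type*} [DecidableEq α] {s : Finset ι}
    {A : ι → Finset α} (hA : (s : Set ι).PairwiseDisjoint A) (hne : ∀ i ∈ s, (A i).Nonempty) :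
    IsMatching (s.image A) ∧ #(s.image A) = #s := by
  have hinj : Set.InjOn A s := fun i hi j hj hij => by
    by_contra hne'
    have := hA hi hj hne'
    rw [Function.onFun, hij] at this
    exact (hne j hj).ne_empty (disjoint_self.1 this)
  refine ⟨?_, card_image_of_injOn hinj⟩
  rw [IsMatching, coe_image, hinj.pairwiseDisjoint_image]
  exact hA

theorem IsShifted.insert_mem_of_insert_mem {n : ℕ} {F : Finset (Finset ℕ)} (hF : IsShifted n F)
    {e : Finset ℕ} {i j : ℕ} (hi : 1 ≤ i) (hij : i < j) (hj : j ≤ n) (hie : i ∉ e)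
    (hje : j ∉ e) (he : insert j e ∈ F) : insert i e ∈ F := by
  have hshift : shiftSet i j (insert j e) = insert i e := by
    rw [shiftSet, if_pos ⟨mem_insert_self j e, by simp [hij.ne, hie]⟩, erase_insert hje]
  rw [← hF i j hi hij hj, ← hshift]
  exact mem_union_left _ (mem_image_of_mem _ he)

section PerfectMatching

variable {α : Type*} [DecidableEq α]

def IsPerfectMatching (B : Finset α) (P : Finset (Finset α)) : Prop :=
  IsMatching P ∧ (∀ e ∈ P, #e = 2) ∧ P.biUnion id = B

theorem IsPerfectMatching.subset {B : Finset α} {P : Finset (Finset α)}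
    (hP : IsPerfectMatching B P) {e : Finset α} (he : e ∈ P) : e ⊆ B :=
  hP.2.2 ▸ subset_biUnion_of_mem id he

theorem IsPerfectMatching.two_mul_card {B : Finset α} {P : Finset (Finset α)}
    (hP : IsPerfectMatching B P) : 2 * #P = #B := by
  rw [← hP.2.2, card_biUnion hP.1]
  simp only [id, sum_congr rfl hP.2.1, sum_const, smul_eq_mul, mul_comm]

theorem IsPerfectMatching.insert_pair {B : Finset α} {P : Finset (Finset α)} {a b : α}
    (ha : a ∈ B) (hb : b ∈ B) (hab : a ≠ b) (hP : IsPerfectMatching ((B.erase a).erase b) P) :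
    IsPerfectMatching B (insert {a, b} P) := by
  have hdisj : ∀ e ∈ P, Disjoint {a, b} e := fun e he => by
    have := hP.subset he
    rw [disjoint_insert_left, disjoint_singleton_left]
    exact ⟨fun h => by simpa using this h, fun h => by simpa using this h⟩
  refine ⟨?_, ?_, ?_⟩
  · rw [IsMatching, coe_insert]
    exact hP.1.insert fun e he _ => hdisj e he
  · rintro e he
    obtain rfl | he := mem_insert.1 he
    exacts [card_pair hab, hP.2.1 e he]
  · rw [biUnion_insert, hP.2.2]
    ext x
    by_cases hxa : x = a <;> by_cases hxb : x = b <;> simp [*]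

theorem exists_isPerfectMatching {B : Finset α} {k : ℕ} (hB : #B = 2 * k) :
    ∃ P, IsPerfectMatching B P := by
  induction k generalizing B with
  | zero => exact ⟨∅, by simp [IsMatching], by simp, by simpa using (card_eq_zero.1 hB).symm⟩
  | succ k ih =>
    obtain ⟨a, ha, b, hb, hab⟩ := one_lt_card.1 (by omega : 1 < #B)
    have hb' : b ∈ B.erase a := mem_erase.2 ⟨Ne.symm hab, hb⟩
    obtain ⟨P, hP⟩ := ih (by rw [card_erase_of_mem hb', card_erase_of_mem ha]; omega)
    exact ⟨_, hP.insert_pair ha hb hab⟩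

end PerfectMatching

section Averaging

variable {α M : Type*} [DecidableEq α] [AddCommMonoid M]

theorem sum_powersetCard_two_insert {S : Finset α} {b : α} (hb : b ∉ S) (w : Finset α → M) :
    ∑ e ∈ (insert b S).powersetCard 2, w e = ∑ e ∈ S.powersetCard 2, w e + ∑ x ∈ S, w {b, x} := by
  rw [powersetCard_succ_insert hb, sum_union, sum_image, powersetCard_one, sum_map]
  · rfl
  · intro x hx y hy hxy
    rw [mem_coe, mem_powersetCard] at hx hy
    rw [← erase_insert (fun h => hb (hx.1 h)), hxy, erase_insert (fun h => hb (hy.1 h))]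
  · refine disjoint_left.2 fun e he he' => ?_
    obtain ⟨x, -, rfl⟩ := mem_image.1 he'
    exact hb ((mem_powersetCard.1 he).1 (mem_insert_self b x))

theorem sum_sum_powersetCard_erase (S : Finset α) (r : ℕ) (w : Finset α → M) :
    ∑ x ∈ S, ∑ e ∈ (S.erase x).powersetCard r, w e = (#S - r) • ∑ e ∈ S.powersetCard r, w e := by
  have hfilter : ∀ x, (S.erase x).powersetCard r = (S.powersetCard r).filter (x ∉ ·) := by
    intro x; ext e; simp only [mem_powersetCard, subset_erase, mem_filter]; tauto
  simp_rw [hfilter, sum_filter]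
  rw [sum_comm, smul_sum]
  refine sum_congr rfl fun e he => ?_
  obtain ⟨heS, he⟩ := mem_powersetCard.1 he
  rw [← sum_filter, sum_const, filter_notMem_eq_sdiff, card_sdiff_of_subset heS, he]

/-- Fix `b ∈ B`: each pair `{b, x}` extends every perfect matching of `B \ {b, x}`, and each pair
avoiding `b` lies in `B \ {b, x}` for exactly `2k - 1` choices of `x`. -/
theorem sum_powersetCard_two_le_of_isPerfectMatching (w : Finset α → ℕ) {B : Finset α} {k C : ℕ}
    (hB : #B = 2 * k) (hC : ∀ P, IsPerfectMatching B P → ∑ e ∈ P, w e ≤ C) :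
    ∑ e ∈ B.powersetCard 2, w e ≤ (2 * k - 1) * C := by
  induction k generalizing B C with
  | zero => simp [card_eq_zero.1 hB]
  | succ k ih =>
    obtain ⟨b, hb⟩ := card_pos.1 (by omega : 0 < #B)
    set S := B.erase b
    have hS : #S = 2 * k + 1 := by rw [card_erase_of_mem hb]; omega
    have hpair : ∀ x ∈ S, ∀ P, IsPerfectMatching (S.erase x) P → w {b, x} + ∑ e ∈ P, w e ≤ C := by
      intro x hx P hP
      have hbx : {b, x} ∉ P := fun h => by simpa [S] using hP.subset h (mem_insert_self b _)
      rw [← sum_insert hbx]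
      exact hC _ (hP.insert_pair hb (mem_of_mem_erase hx) (ne_of_mem_erase hx).symm)
    have hle : ∀ x ∈ S, w {b, x} ≤ C := fun x hx => by
      obtain ⟨P, hP⟩ := exists_isPerfectMatching (k := k) (B := S.erase x)
        (by rw [card_erase_of_mem hx]; omega)
      exact le_of_add_le_left (hpair x hx P hP)
    have hrest : ∑ e ∈ S.powersetCard 2, w e ≤ ∑ x ∈ S, (C - w {b, x}) := by
      have hsum : ∑ x ∈ S, ∑ e ∈ (S.erase x).powersetCard 2, w e ≤
          ∑ x ∈ S, (2 * k - 1) * (C - w {b, x}) :=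
        sum_le_sum fun x hx => ih (by rw [card_erase_of_mem hx]; omega) fun P hP =>
          Nat.le_sub_of_add_le' (hpair x hx P hP)
      rw [sum_sum_powersetCard_erase, hS, smul_eq_mul, ← mul_sum] at hsum
      obtain rfl | hk := k.eq_zero_or_pos
      · simp [powersetCard_eq_empty.2 (by omega : #S < 2)]
      · rw [show 2 * k + 1 - 2 = 2 * k - 1 by omega] at hsum
        exact Nat.le_of_mul_le_mul_left hsum (by omega)
    rw [← insert_erase hb, sum_powersetCard_two_insert (notMem_erase b B)]
    calc ∑ e ∈ S.powersetCard 2, w e + ∑ x ∈ S, w {b, x}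
        ≤ ∑ x ∈ S, (C - w {b, x}) + ∑ x ∈ S, w {b, x} := by gcongr
      _ = ∑ x ∈ S, C := by
          rw [← sum_add_distrib]
          exact sum_congr rfl fun x hx => Nat.sub_add_cancel (hle x hx)
      _ = (2 * (k + 1) - 1) * C := by rw [sum_const, hS, smul_eq_mul]; congr 1

end Averaging

section Selection

def greedyIdx (D : ℕ → ℕ) : ℕ → ℕ
  | 0 => 0
  | k + 1 => max (greedyIdx D k) (D (k + 1)) + 1

variable (D : ℕ → ℕ)

theorem greedyIdx_strictMono : StrictMono (greedyIdx D) :=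
  strictMono_nat_of_lt_succ fun k => by simp only [greedyIdx]; omega

theorem lt_greedyIdx {k : ℕ} (hk : 1 ≤ k) : D k < greedyIdx D k := by
  obtain ⟨j, rfl⟩ := Nat.exists_eq_add_of_le' hk
  simp only [greedyIdx]; omega

theorem exists_greedyIdx_add_le {k : ℕ} (hk : 1 ≤ k) :
    ∃ r ∈ Icc 1 k, greedyIdx D k + r ≤ D r + 1 + k := by
  induction k, hk using Nat.le_induction with
  | base => exact ⟨1, by simp, by simp [greedyIdx]⟩
  | succ k hk ih =>
    obtain ⟨r, hr, hle⟩ := ih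
    rw [mem_Icc] at hr
    by_cases hDk : D (k + 1) ≤ greedyIdx D k
    · exact ⟨r, mem_Icc.2 ⟨hr.1, by omega⟩, by simp only [greedyIdx]; omega⟩
    · exact ⟨k + 1, by simp, by simp only [greedyIdx]; omega⟩

theorem mul_add_mul_le_sum_Icc {D} (hD : Monotone D) {a b T : ℕ} (ha : 1 ≤ a) (hab : a ≤ b)
    (hbT : b ≤ T + 1) : (b - a) * D a + (T + 1 - b) * D b ≤ ∑ v ∈ Icc 1 T, D v := by
  have hdisj : Disjoint (Icc a (b - 1)) (Icc b T) :=
    disjoint_left.2 fun v hv hv' => by simp only [mem_Icc] at hv hv'; omega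
  calc (b - a) * D a + (T + 1 - b) * D b
      = #(Icc a (b - 1)) • D a + #(Icc b T) • D b := by
        simp only [Nat.card_Icc, smul_eq_mul]; congr 2; omega
    _ ≤ ∑ v ∈ Icc a (b - 1), D v + ∑ v ∈ Icc b T, D v := by
        gcongr
        · exact card_nsmul_le_sum _ _ _ fun v hv => hD (mem_Icc.1 hv).1
        · exact card_nsmul_le_sum _ _ _ fun v hv => hD (mem_Icc.1 hv).1
    _ ≤ ∑ v ∈ Icc 1 T, D v := by
        rw [← sum_union hdisj]
        exact sum_le_sum_of_subset fun v hv => by simp only [mem_union, mem_Icc] at hv ⊢; omega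

theorem greedyIdx_le {D} (hD : Monotone D) {t h : ℕ} (hth : t ≤ h)
    (hsum : ∑ v ∈ Icc 1 (2 * t), D v < 2 * h) {k : ℕ} (hk : k ∈ Icc 1 t) :
    greedyIdx D k ≤ h ∧ greedyIdx D k + D (2 * t + 1 - k) ≤ 2 * h := by
  rw [mem_Icc] at hk
  obtain ⟨r, hr, hle⟩ := exists_greedyIdx_add_le D hk.1
  rw [mem_Icc] at hr
  have h₁ := mul_add_mul_le_sum_Icc hD hr.1 (b := 2 * t + 1) (T := 2 * t) (by omega) le_rfl
  have h₂ := mul_add_mul_le_sum_Icc hD hr.1 (b := 2 * t + 1 - k) (T := 2 * t) (by omega) (by omega)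
  have hmono : D r ≤ D (2 * t + 1 - k) := hD (by omega)
  rw [Nat.sub_self, zero_mul, add_zero] at h₁
  rw [show 2 * t + 1 - (2 * t + 1 - k) = k by omega] at h₂
  constructor
  · obtain ⟨p, hp⟩ : ∃ p, p + r = 2 * t + 1 := ⟨2 * t + 1 - r, by omega⟩
    rw [show 2 * t + 1 - r = p by omega] at h₁
    by_contra! hlt
    have hpr : 2 * t ≤ p * r := by nlinarith
    have hDr : p * (h - t + r) ≤ p * D r := Nat.mul_le_mul_left p (by omega)
    nlinarith
  · obtain ⟨q, hq⟩ : ∃ q, q + k + r = 2 * t + 1 := ⟨2 * t + 1 - k - r, by omega⟩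
    rw [show 2 * t + 1 - k - r = q by omega] at h₂
    obtain hB | hB := (D (2 * t + 1 - k)).eq_zero_or_pos
    · omega
    · have hkB : k + D (2 * t + 1 - k) ≤ k * D (2 * t + 1 - k) + 1 := by nlinarith
      have hqA : D r ≤ q * D r := Nat.le_mul_of_pos_left _ (by omega)
      omega

end Selection

section Threshold

variable {φ : ℕ → ℕ} {N : ℕ}

theorem le_iff_add_card_lt_le (hφ : AntitoneOn φ (Icc 1 N)) {x : ℕ} (hx : x ∈ Icc 1 N) (v : ℕ) :
    v ≤ φ x ↔ x + #{y ∈ Icc 1 N | φ y < v} ≤ N := by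
  have hx' := mem_Icc.1 hx
  constructor
  · intro hv
    have hsub : {y ∈ Icc 1 N | φ y < v} ⊆ Icc (x + 1) N := fun y hy => by
      rw [mem_filter] at hy
      have : x < y := by
        by_contra! hyx
        exact absurd (hφ hy.1 hx hyx) (by omega)
      exact mem_Icc.2 ⟨this, (mem_Icc.1 hy.1).2⟩
    have := card_le_card hsub
    simp only [Nat.card_Icc] at this
    omega
  · intro hle
    by_contra! hv
    have hsub : Icc x N ⊆ {y ∈ Icc 1 N | φ y < v} := fun y hy => by
      have hy' := mem_Icc.1 hy
      exact mem_filter.2 ⟨mem_Icc.2 ⟨by omega, hy'.2⟩,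
        (hφ hx (mem_Icc.2 ⟨by omega, hy'.2⟩) hy'.1).trans_lt hv⟩
    have := card_le_card hsub
    simp only [Nat.card_Icc] at this
    omega

theorem sum_card_lt_add_sum_eq {T : ℕ} (hφT : ∀ x ∈ Icc 1 N, φ x ≤ T) :
    ∑ v ∈ Icc 1 T, #{x ∈ Icc 1 N | φ x < v} + ∑ x ∈ Icc 1 N, φ x = T * N := by
  have hswap : ∑ v ∈ Icc 1 T, #{x ∈ Icc 1 N | φ x < v} = ∑ x ∈ Icc 1 N, (T - φ x) := by
    refine (sum_card_bipartiteAbove_eq_sum_card_bipartiteBelow (fun v x => φ x < v)).trans ?_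
    refine sum_congr rfl fun x _ => ?_
    have hIcc : {v ∈ Icc 1 T | φ x < v} = Icc (φ x + 1) T := by
      ext; simp only [mem_filter, mem_Icc]; omega
    rw [bipartiteBelow, hIcc, Nat.card_Icc]
    omega
  rw [hswap, ← sum_add_distrib, sum_congr rfl fun x hx => Nat.sub_add_cancel (hφT x hx),
    sum_const, Nat.card_Icc, smul_eq_mul, Nat.add_sub_cancel, mul_comm]

end Threshold

/-- With `D v` the number of points where `φ < v`, antitonicity turns the requirements on `f k` into
`D k < f k` and `f k + D (2t + 1 - k) ≤ 2h`; the greedy choice meets them because `∑ D < 2h`. -/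
theorem exists_antipodal_selection {φ : ℕ → ℕ} {t h : ℕ} (hth : t ≤ h)
    (hφ : AntitoneOn φ (Icc 1 (2 * h))) (hφt : ∀ x ∈ Icc 1 (2 * h), φ x ≤ 2 * t)
    (hsum : 2 * h * (2 * t - 1) < ∑ x ∈ Icc 1 (2 * h), φ x) :
    ∃ f : ℕ → ℕ, StrictMono f ∧ (∀ k ∈ Icc 1 t, f k ∈ Icc 1 h) ∧
      ∀ k ∈ Icc 1 t, k ≤ φ (2 * h + 1 - f k) ∧ 2 * t + 1 - k ≤ φ (f k) := by
  set D : ℕ → ℕ := fun v => #{x ∈ Icc 1 (2 * h) | φ x < v}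
  have hD : Monotone D := fun v w hvw =>
    card_le_card (monotone_filter_right _ fun x _ hx => lt_of_lt_of_le hx hvw)
  have hDsum : ∑ v ∈ Icc 1 (2 * t), D v < 2 * h := by
    have hsplit : ∑ v ∈ Icc 1 (2 * t), D v + ∑ x ∈ Icc 1 (2 * h), φ x = 2 * t * (2 * h) :=
      sum_card_lt_add_sum_eq hφt
    have h2t : 2 * t * (2 * h) ≤ 2 * h * (2 * t - 1) + 2 * h := by
      rw [Nat.mul_sub_one, mul_comm]; omega
    omega
  refine ⟨greedyIdx D, greedyIdx_strictMono D, fun k hk => ?_, fun k hk => ?_⟩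
  · exact mem_Icc.2 ⟨Nat.one_le_of_lt (lt_greedyIdx D (mem_Icc.1 hk).1),
      (greedyIdx_le hD hth hDsum hk).1⟩
  obtain ⟨hk1, hkt⟩ := mem_Icc.1 hk
  have hDk := lt_greedyIdx D hk1
  obtain ⟨hfh, hfD⟩ := greedyIdx_le hD hth hDsum hk
  constructor
  · rw [le_iff_add_card_lt_le hφ (mem_Icc.2 ⟨by omega, by omega⟩)]
    change _ + D k ≤ _
    omega
  · rw [le_iff_add_card_lt_le hφ (mem_Icc.2 ⟨by omega, by omega⟩)]
    exact hfD

theorem exists_injOn_mem_of_le_card {α : Type*} [DecidableEq α] [Inhabited α]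
    (T : ℕ → Finset α) {j : ℕ} (hT : ∀ k ∈ Icc 1 j, k ≤ #(T k)) :
    ∃ g : ℕ → α, Set.InjOn g (Icc 1 j) ∧ ∀ k ∈ Icc 1 j, g k ∈ T k := by
  have hHall : ∀ S : Finset (Icc 1 j), #S ≤ #(S.biUnion fun k => T k) := by
    intro S
    obtain rfl | hS := S.eq_empty_or_nonempty
    · simp
    set k₀ := S.max' hS
    have hcard : #S ≤ k₀ := by
      calc #S = #(S.map (Function.Embedding.subtype _)) := (card_map _).symm
        _ ≤ #(Icc 1 (k₀ : ℕ)) := card_le_card fun x hx => by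
            obtain ⟨y, hy, rfl⟩ := mem_map.1 hx
            exact mem_Icc.2 ⟨(mem_Icc.1 y.2).1, S.le_max' y hy⟩
        _ = k₀ := by simp
    exact hcard.trans <| (hT k₀ k₀.2).trans <|
      card_le_card (subset_biUnion_of_mem (fun k : Icc 1 j => T k) (S.max'_mem hS))
  obtain ⟨f, hf, hfT⟩ := (all_card_le_biUnion_card_iff_exists_injective _).1 hHall
  refine ⟨fun k => if hk : k ∈ Icc 1 j then f ⟨k, hk⟩ else default, ?_, fun k hk => ?_⟩
  · intro k hk k' hk' hkk'
    simp only [mem_coe] at hk hk'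
    simp only [dif_pos hk, dif_pos hk'] at hkk'
    exact congrArg Subtype.val (hf hkk')
  · simp only [dif_pos hk]
    exact hfT ⟨k, hk⟩

section PairsAndTriples

variable {h : ℕ} {u : ℕ → ℕ} {g : ℕ → Finset ℕ}

def pairOrTriple (h : ℕ) (u : ℕ → ℕ) (g : ℕ → Finset ℕ) : ℕ ⊕ ℕ → Finset ℕ :=
  Sum.elim (fun i => {i, 2 * h + 1 - i}) fun k => insert (u k) (g k)

theorem pairwiseDisjoint_pairOrTriple {P : Finset (Finset ℕ)} {J : Finset ℕ} {j : ℕ}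
    (hP : IsMatching P) (hJ : J ⊆ Icc 1 h) (hu : ∀ k ∈ Icc 1 j, u k ∈ Icc 1 (2 * h))
    (huinj : Set.InjOn u (Icc 1 j)) (hJu : ∀ i ∈ J, ∀ k ∈ Icc 1 j, u k ≠ i ∧ u k ≠ 2 * h + 1 - i)
    (hginj : Set.InjOn g (Icc 1 j)) (hgP : ∀ k ∈ Icc 1 j, g k ∈ P)
    (hg : ∀ k ∈ Icc 1 j, ∀ x ∈ g k, 2 * h < x) :
    ((J.disjSum (Icc 1 j) : Finset (ℕ ⊕ ℕ)) : Set (ℕ ⊕ ℕ)).PairwiseDisjoint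
      (pairOrTriple h u g) := by
  have hpair_triple : ∀ i ∈ J, ∀ k ∈ Icc 1 j,
      Disjoint (pairOrTriple h u g (.inl i)) (pairOrTriple h u g (.inr k)) := by
    intro i hi k hk
    refine disjoint_left.2 fun x hx hx' => ?_
    simp only [pairOrTriple, Sum.elim_inl, Sum.elim_inr, mem_insert, mem_singleton] at hx hx'
    have := mem_Icc.1 (hJ hi)
    have := hJu i hi k hk
    rcases hx' with rfl | hx'
    · omega
    · have := hg k hk x hx'; omega
  rintro (i | k) hi (i' | k') hi' hne <;>
    simp only [mem_coe, inl_mem_disjSum, inr_mem_disjSum] at hi hi'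
  · have := mem_Icc.1 (hJ hi); have := mem_Icc.1 (hJ hi')
    have hii' : i ≠ i' := fun h => hne (congrArg _ h)
    refine disjoint_left.2 fun x hx hx' => ?_
    simp only [pairOrTriple, Sum.elim_inl, mem_insert, mem_singleton] at hx hx'
    omega
  · exact hpair_triple i hi k' hi'
  · exact (hpair_triple i' hi' k hi).symm
  · have hkk' : k ≠ k' := fun h => hne (congrArg _ h)
    have hgg : Disjoint (g k) (g k') := hP (hgP k hi) (hgP k' hi') (hginj.ne hi hi' hkk')
    have := mem_Icc.1 (hu k hi); have := mem_Icc.1 (hu k' hi')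
    have := huinj.ne hi hi' hkk'
    refine disjoint_left.2 fun x hx hx' => ?_
    simp only [pairOrTriple, Sum.elim_inr, mem_insert] at hx hx'
    rcases hx with rfl | hx <;> rcases hx' with hx' | hx'
    · exact this hx'
    · have := hg k' hi' _ hx'; omega
    · have := hg k hi x hx; omega
    · exact disjoint_left.1 hgg hx hx'

theorem exists_isMatching_pairs_add_triples {F P : Finset (Finset ℕ)} {B J : Finset ℕ} {j : ℕ}
    (hB : ∀ b ∈ B, 2 * h < b) (hP : IsMatching P) (hPB : ∀ e ∈ P, e ⊆ B)
    (hanti : ∀ i ∈ Icc 1 h, {i, 2 * h + 1 - i} ∈ F) (hJ : J ⊆ Icc 1 h)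
    (hu : ∀ k ∈ Icc 1 j, u k ∈ Icc 1 (2 * h)) (huinj : Set.InjOn u (Icc 1 j))
    (hJu : ∀ i ∈ J, ∀ k ∈ Icc 1 j, u k ≠ i ∧ u k ≠ 2 * h + 1 - i)
    (hginj : Set.InjOn g (Icc 1 j)) (hgP : ∀ k ∈ Icc 1 j, g k ∈ P)
    (hgF : ∀ k ∈ Icc 1 j, insert (u k) (g k) ∈ F) :
    ∃ M ⊆ F, IsMatching M ∧ (∀ A ∈ M, A ⊆ Icc 1 (2 * h) ∪ B) ∧ #M = #J + j := by
  have hg : ∀ k ∈ Icc 1 j, ∀ x ∈ g k, 2 * h < x := fun k hk x hx => hB x (hPB _ (hgP k hk) hx)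
  have hne : ∀ a ∈ J.disjSum (Icc 1 j), (pairOrTriple h u g a).Nonempty := by
    rintro (i | k) _ <;> simp [pairOrTriple]
  obtain ⟨hM, hcard⟩ := isMatching_image_of_pairwiseDisjoint
    (pairwiseDisjoint_pairOrTriple hP hJ hu huinj hJu hginj hgP hg) hne
  refine ⟨_, ?_, hM, ?_, by rw [hcard, card_disjSum, Nat.card_Icc, Nat.add_sub_cancel]⟩
  · intro S hS
    obtain ⟨i | k, hi, rfl⟩ := mem_image.1 hS <;>
      simp only [inl_mem_disjSum, inr_mem_disjSum] at hi
    exacts [hanti i (hJ hi), hgF k hi]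
  · intro S hS x hx
    obtain ⟨i | k, hi, rfl⟩ := mem_image.1 hS <;>
      simp only [inl_mem_disjSum, inr_mem_disjSum] at hi <;>
      simp only [pairOrTriple, Sum.elim_inl, Sum.elim_inr, mem_insert, mem_singleton] at hx <;>
      rw [mem_union, mem_Icc]
    · have := mem_Icc.1 (hJ hi); omega
    · rcases hx with rfl | hx
      exacts [Or.inl (mem_Icc.1 (hu k hi)), Or.inr (hPB _ (hgP k hi) hx)]

end PairsAndTriples

section SelectedVertex

/-- The endpoints of the antipodal pairs `{f k, 2h + 1 - f k}`, `k ≤ t`, listed so that the `k`-th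
one has `φ`-value at least `k` (`le_apply_selectedVertex`). -/
def selectedVertex (h t : ℕ) (f : ℕ → ℕ) (k : ℕ) : ℕ :=
  if k ≤ t then 2 * h + 1 - f k else f (2 * t + 1 - k)

variable {h t : ℕ} {f : ℕ → ℕ}

theorem selectedVertex_mem (hfI : ∀ k ∈ Icc 1 t, f k ∈ Icc 1 h) {k : ℕ}
    (hk : k ∈ Icc 1 (2 * t)) :
    selectedVertex h t f k ∈ Icc 1 (2 * h) := by
  rw [mem_Icc] at hk
  unfold selectedVertex
  split_ifs with hkt
  · have := mem_Icc.1 (hfI k (mem_Icc.2 ⟨hk.1, hkt⟩)); exact mem_Icc.2 ⟨by omega, by omega⟩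
  · have := mem_Icc.1 (hfI (2 * t + 1 - k) (mem_Icc.2 ⟨by omega, by omega⟩))
    exact mem_Icc.2 ⟨by omega, by omega⟩

theorem selectedVertex_injOn (hf : StrictMono f) (hfI : ∀ k ∈ Icc 1 t, f k ∈ Icc 1 h) :
    Set.InjOn (selectedVertex h t f) (Icc 1 (2 * t)) := by
  intro k hk k' hk' hkk'
  simp only [mem_coe, mem_Icc] at hk hk'
  have hmem : ∀ k, 1 ≤ k → k ≤ t → 1 ≤ f k ∧ f k ≤ h := fun k h1 h2 =>
    mem_Icc.1 (hfI k (mem_Icc.2 ⟨h1, h2⟩))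
  unfold selectedVertex at hkk'
  split_ifs at hkk' with h1 h2 h2
  · have := hmem k hk.1 h1; have := hmem k' hk'.1 h2
    exact hf.injective (by omega)
  · have := hmem k hk.1 h1; have := hmem (2 * t + 1 - k') (by omega) (by omega); omega
  · have := hmem k' hk'.1 h2; have := hmem (2 * t + 1 - k) (by omega) (by omega); omega
  · have := hf.injective hkk'; omega

theorem selectedVertex_ne (hfI : ∀ k ∈ Icc 1 t, f k ∈ Icc 1 h) {i : ℕ}
    (hi : i ∈ Icc 1 h \ (Icc 1 t).image f) {k : ℕ} (hk : k ∈ Icc 1 (2 * t)) :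
    selectedVertex h t f k ≠ i ∧ selectedVertex h t f k ≠ 2 * h + 1 - i := by
  obtain ⟨hi, hif⟩ := mem_sdiff.1 hi
  rw [mem_Icc] at hi hk
  have hne : ∀ k ∈ Icc 1 t, f k ≠ i := fun k hk hfk => hif (mem_image.2 ⟨k, hk, hfk⟩)
  unfold selectedVertex
  split_ifs with hkt
  · have := mem_Icc.1 (hfI k (mem_Icc.2 ⟨hk.1, hkt⟩)); have := hne k (mem_Icc.2 ⟨hk.1, hkt⟩)
    omega
  · have hk' : 2 * t + 1 - k ∈ Icc 1 t := mem_Icc.2 ⟨by omega, by omega⟩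
    have := mem_Icc.1 (hfI _ hk'); have := hne _ hk'
    omega

theorem le_apply_selectedVertex {φ : ℕ → ℕ}
    (hfφ : ∀ k ∈ Icc 1 t, k ≤ φ (2 * h + 1 - f k) ∧ 2 * t + 1 - k ≤ φ (f k)) {k : ℕ}
    (hk : k ∈ Icc 1 (2 * t)) : k ≤ φ (selectedVertex h t f k) := by
  rw [mem_Icc] at hk
  unfold selectedVertex
  split_ifs with hkt
  · exact (hfφ k (mem_Icc.2 ⟨hk.1, hkt⟩)).1
  · have := (hfφ (2 * t + 1 - k) (mem_Icc.2 ⟨by omega, by omega⟩)).2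
    rwa [show 2 * t + 1 - (2 * t + 1 - k) = k by omega] at this

end SelectedVertex

theorem sum_card_insert_mem_le {n h t : ℕ} {F P : Finset (Finset ℕ)} {B : Finset ℕ}
    (hF : IsShifted n F) (hhn : 2 * h ≤ n) (hth : t ≤ h)
    (hanti : ∀ i ∈ Icc 1 h, {i, 2 * h + 1 - i} ∈ F)
    (hB : ∀ b ∈ B, 2 * h < b ∧ b ≤ n) (hP : IsMatching P) (hPB : ∀ e ∈ P, e ⊆ B)
    (hPt : #P = 2 * t)
    (hν : ∀ M ⊆ F, IsMatching M → (∀ A ∈ M, A ⊆ Icc 1 (2 * h) ∪ B) → #M < h + t) :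
    ∑ e ∈ P, #{x ∈ Icc 1 (2 * h) | insert x e ∈ F} ≤ 2 * h * (2 * t - 1) := by
  by_contra! hsum
  set φ : ℕ → ℕ := fun x => #{e ∈ P | insert x e ∈ F}
  have hswap : ∑ e ∈ P, #{x ∈ Icc 1 (2 * h) | insert x e ∈ F} = ∑ x ∈ Icc 1 (2 * h), φ x :=
    sum_card_bipartiteAbove_eq_sum_card_bipartiteBelow fun e x => insert x e ∈ F
  have hout : ∀ e ∈ P, ∀ x ≤ 2 * h, x ∉ e := fun e he x hx hxe => by
    have := (hB x (hPB e he hxe)).1; omega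
  have hφ : AntitoneOn φ (Icc 1 (2 * h)) := by
    intro x hx y hy hxy
    rw [mem_coe, mem_Icc] at hx hy
    refine card_le_card (monotone_filter_right _ fun e he hye => ?_)
    obtain rfl | hxy := hxy.eq_or_lt
    · exact hye
    exact hF.insert_mem_of_insert_mem hx.1 hxy (by omega) (hout e he x (by omega))
      (hout e he y hy.2) hye
  have hφt : ∀ x ∈ Icc 1 (2 * h), φ x ≤ 2 * t := fun x _ => hPt ▸ card_filter_le _ _
  obtain ⟨f, hf, hfI, hfφ⟩ := exists_antipodal_selection hth hφ hφt (hswap ▸ hsum)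
  obtain ⟨g, hginj, hg⟩ := exists_injOn_mem_of_le_card _ fun k hk =>
    le_apply_selectedVertex (φ := φ) hfφ hk
  have hJ : #(Icc 1 h \ (Icc 1 t).image f) = h - t := by
    rw [card_sdiff_of_subset fun i hi => by obtain ⟨k, hk, rfl⟩ := mem_image.1 hi; exact hfI k hk,
      card_image_of_injective _ hf.injective, Nat.card_Icc, Nat.card_Icc]
    omega
  obtain ⟨M, hMF, hM, hMB, hMcard⟩ := exists_isMatching_pairs_add_triples
    (fun b hb => (hB b hb).1) hP hPB hanti sdiff_subset (fun k hk => selectedVertex_mem hfI hk)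
    (selectedVertex_injOn hf hfI) (fun i hi k hk => selectedVertex_ne hfI hi hk) hginj
    (fun k hk => (mem_filter.1 (hg k hk)).1) fun k hk => (mem_filter.1 (hg k hk)).2
  have := hν M hMF hM hMB
  omega

theorem yF_three_eq (n : ℕ) (F : Finset (Finset ℕ)) :
    yF n F 3 = #{A ∈ (ground n).powersetCard 3 | A ∉ F} := by
  have hsplit := card_filter_add_card_filter_not (s := (ground n).powersetCard 3) (· ∈ F)
  have hcard : #((ground n).powersetCard 3) = n.choose 3 := by
    rw [card_powersetCard, ground, Nat.card_Icc, Nat.add_sub_cancel]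
  rw [hcard] at hsplit
  rw [yF, layer, inter_comm, ← filter_mem_eq_inter]
  omega

theorem sum_card_insert_notMem_le_yF {n N : ℕ} {F : Finset (Finset ℕ)} {B : Finset ℕ}
    (hNn : N ≤ n) (hB : ∀ b ∈ B, N < b ∧ b ≤ n) :
    ∑ e ∈ B.powersetCard 2, #{x ∈ Icc 1 N | insert x e ∉ F} ≤ yF n F 3 := by
  rw [yF_three_eq, ← card_sigma]
  have hout : ∀ e ∈ B.powersetCard 2, ∀ x ≤ N, x ∉ e := fun e he x hx hxe => by
    have := (hB x ((mem_powersetCard.1 he).1 hxe)).1; omega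
  refine card_le_card_of_injOn (fun p => insert p.2 p.1) ?_ ?_
  · rintro ⟨e, x⟩ hp
    simp only [coe_sigma, Set.mem_sigma_iff, mem_coe, mem_powersetCard, mem_filter, mem_Icc] at hp ⊢
    refine ⟨⟨insert_subset (mem_Icc.2 ⟨hp.2.1.1, by omega⟩) fun b hb => ?_, ?_⟩, hp.2.2⟩
    · have := hB b (hp.1.1 hb); exact mem_Icc.2 ⟨by omega, this.2⟩
    · rw [card_insert_of_notMem (hout e (mem_powersetCard.2 hp.1) x hp.2.1.2), hp.1.2]
  · rintro ⟨e, x⟩ hp ⟨e', x'⟩ hp' heq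
    simp only [coe_sigma, Set.mem_sigma_iff, mem_coe, mem_filter, mem_Icc] at hp hp' heq
    have hx : x ∉ e := hout e hp.1 x hp.2.1.2
    have hx' : x' ∉ e' := hout e' hp'.1 x' hp'.2.1.2
    have hxx : x = x' := by
      have := heq ▸ mem_insert_self x e
      rcases mem_insert.1 this with h | h
      · exact h
      · exact absurd h (hout e' hp'.1 x hp.2.1.2)
    subst hxx
    rw [← erase_insert hx, heq, erase_insert hx']

theorem mul_choose_two_le_sum_add_yF {n N : ℕ} {F : Finset (Finset ℕ)} {B : Finset ℕ}
    (hNn : N ≤ n) (hB : ∀ b ∈ B, N < b ∧ b ≤ n) :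
    N * (#B).choose 2 ≤ ∑ e ∈ B.powersetCard 2, #{x ∈ Icc 1 N | insert x e ∈ F} + yF n F 3 := by
  have hsplit : ∑ e ∈ B.powersetCard 2, (#{x ∈ Icc 1 N | insert x e ∈ F} +
      #{x ∈ Icc 1 N | insert x e ∉ F}) = N * (#B).choose 2 := by
    simp only [card_filter_add_card_filter_not, Nat.card_Icc, Nat.add_sub_cancel, sum_const,
      card_powersetCard, smul_eq_mul, mul_comm]
  rw [sum_add_distrib] at hsplit
  have := sum_card_insert_notMem_le_yF (F := F) hNn hB
  omega

theorem mul_le_yF_three {n N t : ℕ} {F : Finset (Finset ℕ)} {B : Finset ℕ} (hNn : N ≤ n)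
    (hB : ∀ b ∈ B, N < b ∧ b ≤ n) (hBt : #B = 4 * t)
    (hmatch : ∀ P, IsPerfectMatching B P →
      ∑ e ∈ P, #{x ∈ Icc 1 N | insert x e ∈ F} ≤ N * (2 * t - 1)) :
    N * (4 * t - 1) ≤ yF n F 3 := by
  obtain rfl | ht := t.eq_zero_or_pos
  · simp
  have havg := sum_powersetCard_two_le_of_isPerfectMatching _ (k := 2 * t) (by omega) hmatch
  have hcount := mul_choose_two_le_sum_add_yF (F := F) hNn hB
  have hchoose : (#B).choose 2 = 2 * t * (4 * t - 1) := by
    rw [hBt, Nat.choose_two_right, show 4 * t * (4 * t - 1) = 2 * (2 * t * (4 * t - 1)) by ring,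
      Nat.mul_div_cancel_left _ two_pos]
  rw [hchoose] at hcount
  rw [show 2 * (2 * t) - 1 = 4 * t - 1 by omega] at havg
  have hsplit : N * (2 * t * (4 * t - 1)) = (4 * t - 1) * (N * (2 * t - 1)) + N * (4 * t - 1) := by
    obtain ⟨b, hb⟩ : ∃ b, 2 * t = b + 1 := ⟨2 * t - 1, by omega⟩
    rw [hb, Nat.add_sub_cancel]
    ring
  omega

theorem exists_block_add_le_matchingNumber {F M : Finset (Finset ℕ)} {N n : ℕ} (hMF : M ⊆ F)
    (hM : IsMatching M) (hM3 : ∀ A ∈ M, A ⊆ Icc (N + 1) n ∧ #A = 3) :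
    ∃ B : Finset ℕ, #B + 3 * #M = n - N ∧ (∀ b ∈ B, N < b ∧ b ≤ n) ∧
      ∀ M' ⊆ F, IsMatching M' → (∀ A ∈ M', A ⊆ Icc 1 N ∪ B) → #M' + #M ≤ matchingNumber F := by
  set Y := M.biUnion id
  have hY : Y ⊆ Icc (N + 1) n := biUnion_subset.2 fun A hA => (hM3 A hA).1
  have hYcard : #Y = 3 * #M := by
    rw [card_biUnion hM]
    simp only [id, sum_congr rfl fun A hA => (hM3 A hA).2, sum_const, smul_eq_mul, mul_comm]
  refine ⟨Icc (N + 1) n \ Y, ?_, fun b hb => ?_, fun M' hM'F hM' hM'B => ?_⟩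
  · rw [card_sdiff_of_subset hY, Nat.card_Icc, hYcard]
    have := card_le_card hY
    rw [Nat.card_Icc, hYcard] at this
    omega
  · have := mem_Icc.1 (mem_sdiff.1 hb).1; omega
  · refine card_add_card_le_matchingNumber hM'F hMF hM' hM
      (fun A hA => card_pos.1 (by rw [(hM3 A hA).2]; norm_num)) fun A hA A' hA' => ?_
    refine disjoint_left.2 fun x hx hx' => ?_
    have hxY : x ∈ Y := mem_biUnion.2 ⟨A', hA', hx'⟩
    rcases mem_union.1 (hM'B A hA hx) with hx | hx
    · have := mem_Icc.1 (hY hxY); have := mem_Icc.1 hx; omega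
    · exact (mem_sdiff.1 hx).2 hxY

theorem pair_mem_of_two_mul_lt_dF {l t : ℕ} {F : Finset (Finset ℕ)} (hd : 2 * t < dF l F) {i : ℕ}
    (hi : i ∈ Icc 1 (l + t)) : {i, 2 * (l + t) + 1 - i} ∈ F := by
  by_contra hiF
  have hD : DCond l F (2 * t) := by
    refine Or.inl ⟨even_two_mul t, i, by rwa [Nat.mul_div_cancel_left t two_pos], ?_⟩
    rwa [show 2 * l + 2 * t + 1 - i = 2 * (l + t) + 1 - i by omega]
  exact absurd (Nat.sInf_le hD) (not_le.2 hd)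

theorem stmt_12_general (n s l c d : ℕ)
    (hcl : c + l = s) (hn : n = 2 * l + 3 * c)
    (F : Finset (Finset ℕ)) (hsh : IsShifted n F)
    (hnu : matchingNumber F < s)
    (hd : Odd d) (hdc : d ≤ c + 1) (hdF : d ≤ dF l F)
    (hm : c + 1 - d ≤ matchingNumber (F ∩ (Finset.Icc (2 * l + d) n).powersetCard 3)) :
    (2 * (l : ℤ) + (d : ℤ) - 1) * (2 * (d : ℤ) - 3) ≤ (yF n F 3 : ℤ) := by
  obtain ⟨t, rfl⟩ := hd
  obtain rfl | ht := t.eq_zero_or_pos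
  · have := Int.natCast_nonneg (yF n F 3)
    push_cast
    nlinarith
  obtain ⟨M, hMF, hM, hMcard⟩ := exists_isMatching_card_eq hm
  obtain ⟨B, hBcard, hB, hν⟩ := exists_block_add_le_matchingNumber (N := 2 * (l + t))
    (hMF.trans inter_subset_left) hM fun A hA => by
      have := mem_powersetCard.1 (mem_inter.1 (hMF hA)).2
      exact ⟨this.1.trans (Icc_subset_Icc_left (by omega)), this.2⟩
  have hy : 2 * (l + t) * (4 * t - 1) ≤ yF n F 3 :=
    mul_le_yF_three (by omega) hB (by omega) fun P hP =>
      sum_card_insert_mem_le hsh (by omega) (by omega)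
        (fun i hi => pair_mem_of_two_mul_lt_dF (by omega) hi) hB hP.1 (fun e he => hP.subset he)
        (by have := hP.two_mul_card; omega) fun M' hM'F hM' hM'B => by
          have := hν M' hM'F hM' hM'B; omega
  have hy' : ((2 * (l + t) * (4 * t - 1) : ℕ) : ℤ) ≤ yF n F 3 := by exact_mod_cast hy
  push_cast [show 1 ≤ 4 * t by omega] at hy' ⊢
  linarith

theorem stmt_12 (n s l c d : ℕ) (hs0 : 0 < s) (hl0 : 0 < l) (hc0 : 0 < c)
    (hcl : c + l = s) (hn : n = 2 * l + 3 * c)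
    (F : Finset (Finset ℕ)) (hF : ∀ A ∈ F, A ⊆ ground n) (hsh : IsShifted n F)
    (hnu : matchingNumber F < s)
    (hd : Odd d) (hdc : d ≤ c + 1) (hdF : d ≤ dF l F)
    (hm : c + 1 - d ≤ matchingNumber (F ∩ (Finset.Icc (2 * l + d) n).powersetCard 3)) :
    (2 * (l : ℤ) + (d : ℤ) - 1) * (2 * (d : ℤ) - 3) ≤ (yF n F 3 : ℤ) :=
  stmt_12_general n s l c d hcl hn F hsh hnu hd hdc hdF hm
end
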